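/- The 1|dⱼ=d|Σ pⱼUⱼ problem with common due date d is equivalent to Subset Sum: the minimum total processing time of tardy jobs equals P − max{s ∈ 𝒮(X) : s ≤ d}, where X is the multiset of all processing times and P their sum. -/

import Mathlib

/-!
Scheduling the jobs of a set `A` first makes all of them on time as soon as `∑_{j ∈ A} pⱼ ≤ d`;
conversely, all on-time jobs of a schedule finish by the completion time of the last of them,
so their total load is a subset sum of `X` that is at most `d`. Hence the largest achievable on-time load is
`max {s ∈ 𝒮(X) : s ≤ d}`, and the tardy load is `P` minus the on-time load.
-/

/-- The set of all sub-multiset sums of a multiset of natural numbers. -/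
def subsetSums (X : Multiset ℕ) : Set ℕ := {s | ∃ Y ≤ X, Y.sum = s}

/-- Completion time of job `j` in schedule `σ`. -/
def completion (n : ℕ) (p : Fin n → ℕ) (σ : Equiv.Perm (Fin n)) (j : Fin n) : ℕ :=
  ∑ i ∈ Finset.univ.filter (fun i => σ i ≤ σ j), p i

/-- Total processing time of tardy jobs in `σ`, all jobs having common due date `d`. -/
def cost (n : ℕ) (p : Fin n → ℕ) (d : ℕ) (σ : Equiv.Perm (Fin n)) : ℕ :=
  ∑ j ∈ Finset.univ.filter (fun j => d < completion n p σ j), p j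

theorem Multiset.exists_le_map_eq_of_le_map {α β : Type*} {f : α → β} {s : Multiset α}
    {Y : Multiset β} (h : Y ≤ s.map f) : ∃ t ≤ s, t.map f = Y := by
  have hY : Y ∈ powersetCard (card Y) (s.map f) := mem_powersetCard.2 ⟨h, rfl⟩
  rw [powersetCard_map, mem_map] at hY
  obtain ⟨t, ht, rfl⟩ := hY
  exact ⟨t, (mem_powersetCard.1 ht).1, rfl⟩

theorem mem_subsetSums_map_iff {ι : Type*} (s : Finset ι) (p : ι → ℕ) (x : ℕ) :
    x ∈ subsetSums (s.val.map p) ↔ ∃ A ⊆ s, ∑ j ∈ A, p j = x := by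
  constructor
  · rintro ⟨Y, hY, rfl⟩
    obtain ⟨t, hts, rfl⟩ := Multiset.exists_le_map_eq_of_le_map hY
    exact ⟨⟨t, Multiset.nodup_of_le hts s.nodup⟩, Finset.val_le_iff.1 hts, rfl⟩
  · rintro ⟨A, hAs, rfl⟩
    exact ⟨A.val.map p, Multiset.map_le_map (Finset.val_le_iff.2 hAs), rfl⟩

theorem exists_perm_le_imp_le {α : Type*} [LinearOrder α] {n : ℕ} (f : Fin n → α) :
    ∃ σ : Equiv.Perm (Fin n), ∀ i j, σ i ≤ σ j → f i ≤ f j :=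
  ⟨(Tuple.sort f)⁻¹, fun i j h => by simpa using Tuple.monotone_sort f h⟩

section OnTime

variable (n : ℕ) (p : Fin n → ℕ) (d : ℕ)

def onTimeLoad (σ : Equiv.Perm (Fin n)) : ℕ :=
  ∑ j ∈ Finset.univ.filter (fun j => completion n p σ j ≤ d), p j

variable {n p d}

theorem cost_eq_sub_onTimeLoad (σ : Equiv.Perm (Fin n)) :
    cost n p d σ = (∑ j, p j) - onTimeLoad n p d σ := by
  rw [← Finset.sum_filter_add_sum_filter_not Finset.univ fun j => d < completion n p σ j]
  simp only [cost, onTimeLoad, not_lt, Nat.add_sub_cancel]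

theorem onTimeLoad_le (σ : Equiv.Perm (Fin n)) : onTimeLoad n p d σ ≤ d := by
  set E := Finset.univ.filter (fun j => completion n p σ j ≤ d)
  rcases E.eq_empty_or_nonempty with hE | hE
  · simp [onTimeLoad, E, hE]
  obtain ⟨j, hjE, hj_last⟩ := E.exists_max_image σ hE
  calc onTimeLoad n p d σ ≤ completion n p σ j :=
        Finset.sum_le_sum_of_subset fun i hi => by simpa using hj_last i hi
    _ ≤ d := (Finset.mem_filter.1 hjE).2

theorem onTimeLoad_mem_subsetSums (σ : Equiv.Perm (Fin n)) :
    onTimeLoad n p d σ ∈ subsetSums (Finset.univ.val.map p) :=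
  (mem_subsetSums_map_iff _ _ _).2 ⟨_, Finset.subset_univ _, rfl⟩

theorem exists_sum_le_onTimeLoad {A : Finset (Fin n)} (hA : ∑ j ∈ A, p j ≤ d) :
    ∃ σ, ∑ j ∈ A, p j ≤ onTimeLoad n p d σ := by
  obtain ⟨σ, hσ⟩ := exists_perm_le_imp_le fun j => if j ∈ A then 0 else 1
  have hA_first : ∀ i j, σ i ≤ σ j → j ∈ A → i ∈ A := fun i j hij hj => by
    simpa [hj] using hσ i j hij
  refine ⟨σ, Finset.sum_le_sum_of_subset fun j hj => Finset.mem_filter.2 ⟨Finset.mem_univ j, ?_⟩⟩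
  calc completion n p σ j ≤ ∑ i ∈ A, p i :=
        Finset.sum_le_sum_of_subset fun i hi => hA_first i j (Finset.mem_filter.1 hi).2 hj
    _ ≤ d := hA

theorem isGreatest_range_onTimeLoad :
    IsGreatest (Set.range (onTimeLoad n p d))
      (sSup {s ∈ subsetSums (Finset.univ.val.map p) | s ≤ d}) := by
  set S := {s ∈ subsetSums (Finset.univ.val.map p) | s ≤ d}
  have hbdd : BddAbove S := ⟨d, fun s hs => hs.2⟩
  have hload_mem (σ : Equiv.Perm (Fin n)) : onTimeLoad n p d σ ∈ S :=
    ⟨onTimeLoad_mem_subsetSums σ, onTimeLoad_le σ⟩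
  obtain ⟨hmax, hmax_le⟩ : sSup S ∈ S := Nat.sSup_mem ⟨_, hload_mem 1⟩ hbdd
  obtain ⟨A, -, hA⟩ := (mem_subsetSums_map_iff _ _ _).1 hmax
  obtain ⟨σ, hσ⟩ := exists_sum_le_onTimeLoad (hA ▸ hmax_le)
  refine ⟨⟨σ, le_antisymm (le_csSup hbdd (hload_mem σ)) (hA ▸ hσ)⟩, ?_⟩
  rintro _ ⟨τ, rfl⟩
  exact le_csSup hbdd (hload_mem τ)

end OnTime

/-- For the common-due-date problem `1|dⱼ=d|Σ pⱼUⱼ`, the minimum total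
processing time of tardy jobs equals `P − max{s ∈ 𝒮(X) : s ≤ d}`, where `X` is the
multiset of all processing times and `P` their sum. -/
theorem common_due_date_subset_sum (n : ℕ) (p : Fin n → ℕ) (d : ℕ) :
    IsLeast {c | ∃ σ : Equiv.Perm (Fin n), c = cost n p d σ}
      ((∑ j, p j) - sSup {s ∈ subsetSums (Multiset.map p Finset.univ.val) | s ≤ d}) := by
  have hcost : {c | ∃ σ : Equiv.Perm (Fin n), c = cost n p d σ} =
      (fun t => (∑ j, p j) - t) '' Set.range (onTimeLoad n p d) := by
    rw [← Set.range_comp]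
    ext c
    simp [cost_eq_sub_onTimeLoad, eq_comm]
  rw [hcost]
  exact antitone_const_tsub.map_isGreatest isGreatest_range_onTimeLoad
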